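/- arXiv:2511.23023 — 5 statements merged into one kernel-verified Lean document; each statement's English description precedes it below -/
import Mathlib

section
/- Let W ∈ ℝ^{n×n} satisfy Assumption 1 and let w be its normalized left Perron eigenvector. For a matrix K ∈ ℝ^{n×n}, the following are equivalent: (i) for every initial state x₀ ∈ ℝ^n, the iterates x_{t+1} = (W+K)x_t converge to the original consensus point, i.e. lim_{t→∞} (W+K)^t x₀ = (wᵀx₀)·1; (ii) K·1 = 0, wᵀK = 0, and 1 is a simple eigenvalue of W+K while every other (complex) eigenvalue of W+K has modulus strictly less than 1. -/
open Matrix Filter Polynomial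

/-- Assumption 1: `W` is row-stochastic, `1` is a simple eigenvalue of `W` (over `ℂ`),
all other eigenvalues have modulus `< 1`, and `w` is the normalized left Perron
eigenvector of `W`. -/
def Assumption1 {n : ℕ} (W : Matrix (Fin n) (Fin n) ℝ) (w : Fin n → ℝ) : Prop :=
  (∀ i j, 0 ≤ W i j) ∧
  W *ᵥ (1 : Fin n → ℝ) = 1 ∧
  ((W.map (algebraMap ℝ ℂ)).charpoly.rootMultiplicity 1 = 1) ∧
  (∀ μ : ℂ, (W.map (algebraMap ℝ ℂ)).charpoly.IsRoot μ → μ ≠ 1 → ‖μ‖ < 1) ∧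
  w ᵥ* W = w ∧
  w ⬝ᵥ (1 : Fin n → ℝ) = 1

/-!
With `P = 1 wᵀ`, condition (i) says that `(W + K) ^ t → P`. Passing to the limit in
`(W + K) ^ (t + 1)` gives `(W + K) P = P = P (W + K)`, i.e. `K 1 = 0` and `wᵀ K = 0`. Given these,
`(W + K - P) ^ (t + 1) = (W + K) ^ (t + 1) - P`, so (i) amounts to `(W + K - P) ^ t → 0`, which by
Gelfand's formula means that every eigenvalue of `W + K - P` lies in the open unit disc. Deflating
the eigenvalue `1` by the rank-one `P` changes the characteristic polynomial by the factor
`X / (X - 1)`, and this turns the disc condition for `W + K - P` into (ii) for `W + K`.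
-/

open Topology

theorem tendsto_pow_atTop_nhds_zero_of_spectralRadius_lt_one {A : Type*} [NormedRing A]
    [NormedAlgebra ℂ A] [CompleteSpace A] {a : A} (ha : spectralRadius ℂ a < 1) :
    Tendsto (a ^ ·) atTop (𝓝 0) := by
  obtain ⟨r, hρr, hr1⟩ := ENNReal.lt_iff_exists_nnreal_btwn.1 ha
  have hbound : ∀ᶠ t : ℕ in atTop, ‖a ^ t‖ ≤ r ^ t := by
    filter_upwards [(spectrum.pow_nnnorm_pow_one_div_tendsto_nhds_spectralRadius a
      ).eventually_lt_const hρr, eventually_gt_atTop 0] with t ht htpos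
    rw [one_div, ENNReal.rpow_inv_lt_iff (by positivity), ENNReal.rpow_natCast] at ht
    exact_mod_cast ht.le
  exact squeeze_zero_norm' hbound
    (tendsto_pow_atTop_nhds_zero_of_lt_one r.2 (by exact_mod_cast hr1))

section PowersNearIdempotent

variable {R : Type*} [Ring R] {M P : R}

theorem sub_pow_succ_of_mul_eq (hMP : M * P = P) (hPM : P * M = P) (hP : IsIdempotentElem P)
    (t : ℕ) : (M - P) ^ (t + 1) = M ^ (t + 1) - P := by
  have hpow_mul (t : ℕ) : M ^ t * P = P := by
    induction t with
    | zero => rw [pow_zero, one_mul]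
    | succ t ih => rw [pow_succ', mul_assoc, ih, hMP]
  induction t with
  | zero => rw [zero_add, pow_one, pow_one]
  | succ t ih =>
    rw [pow_succ, ih, sub_mul, mul_sub, mul_sub, hpow_mul, hPM, hP.eq, ← pow_succ]
    abel

variable [TopologicalSpace R] [IsTopologicalRing R]

theorem tendsto_pow_nhds_iff_tendsto_sub_pow_nhds_zero (hMP : M * P = P) (hPM : P * M = P)
    (hP : IsIdempotentElem P) :
    Tendsto (M ^ ·) atTop (𝓝 P) ↔ Tendsto ((M - P) ^ ·) atTop (𝓝 0) := by
  rw [← tendsto_add_atTop_iff_nat 1, ← tendsto_add_atTop_iff_nat (f := ((M - P) ^ ·)) 1]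
  simp_rw [sub_pow_succ_of_mul_eq hMP hPM hP, tendsto_sub_nhds_zero_iff]

variable [T2Space R]

theorem mul_eq_of_tendsto_pow (h : Tendsto (M ^ ·) atTop (𝓝 P)) : M * P = P :=
  tendsto_nhds_unique (h.const_mul M) <|
    ((tendsto_add_atTop_iff_nat 1).2 h).congr fun t => pow_succ' M t

theorem mul_eq_of_tendsto_pow' (h : Tendsto (M ^ ·) atTop (𝓝 P)) : P * M = P :=
  tendsto_nhds_unique (h.mul_const M) <|
    ((tendsto_add_atTop_iff_nat 1).2 h).congr fun t => pow_succ M t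

end PowersNearIdempotent

theorem Polynomial.forall_norm_lt_one_iff_of_mul_X_sub_C_one_eq_mul_X {𝕜 : Type*}
    [NormedField 𝕜] {p q : 𝕜[X]} (hq0 : q ≠ 0) (hpq : p * (X - C 1) = q * X) :
    (∀ μ, p.IsRoot μ → ‖μ‖ < 1) ↔
      q.rootMultiplicity 1 = 1 ∧ ∀ μ, q.IsRoot μ → μ ≠ 1 → ‖μ‖ < 1 := by
  have heval (μ : 𝕜) : p.eval μ * (μ - 1) = q.eval μ * μ := by
    simpa using congrArg (eval μ) hpq
  have hmult : p.rootMultiplicity 1 + 1 = q.rootMultiplicity 1 := by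
    have hpq0 : p * (X - C 1) ≠ 0 := hpq ▸ mul_ne_zero hq0 X_ne_zero
    have := congrArg (rootMultiplicity 1) hpq
    rwa [rootMultiplicity_mul hpq0, rootMultiplicity_mul (hpq ▸ hpq0),
      rootMultiplicity_X_sub_C_self, rootMultiplicity_eq_zero (by simp : ¬ (X : 𝕜[X]).IsRoot 1),
      add_zero] at this
  constructor
  · intro hp
    refine ⟨?_, fun μ hμ hμ1 => hp μ ?_⟩
    · have : ¬ p.IsRoot 1 := fun h => by simpa using hp 1 h
      rw [← hmult, rootMultiplicity_eq_zero this]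
    · simpa [IsRoot.def, hμ.eq_zero, sub_ne_zero.2 hμ1] using heval μ
  · rintro ⟨hq1, hroots⟩ μ hμ
    rcases eq_or_ne μ 1 with rfl | hμ1
    · have hp0 : p ≠ 0 := by rintro rfl; simp at hpq; exact hq0 hpq
      have := (rootMultiplicity_pos hp0).2 hμ
      omega
    rcases eq_or_ne μ 0 with rfl | hμ0
    · simp
    exact hroots μ (by simpa [IsRoot.def, hμ.eq_zero, hμ0] using (heval μ).symm) hμ1

namespace Matrix

theorem tendsto_iff_forall_tendsto_mulVec {α m n R : Type*} [Fintype n] [DecidableEq n]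
    [NonAssocSemiring R] [TopologicalSpace R] [ContinuousAdd R] [ContinuousMul R]
    {f : α → Matrix m n R} {l : Filter α} {A : Matrix m n R} :
    Tendsto f l (𝓝 A) ↔ ∀ x, Tendsto (fun a => f a *ᵥ x) l (𝓝 (A *ᵥ x)) := by
  refine ⟨fun h x => ((continuous_id.matrix_mulVec continuous_const).tendsto A).comp h,
    fun h => tendsto_pi_nhds.2 fun i => tendsto_pi_nhds.2 fun j => ?_⟩
  simpa [mulVec_single_one] using tendsto_pi_nhds.1 (h (Pi.single j 1)) i

variable {ι : Type*} [Fintype ι] [DecidableEq ι]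

theorem tendsto_pow_atTop_nhds_zero_iff_forall_isRoot_charpoly (B : Matrix ι ι ℂ) :
    Tendsto (B ^ ·) atTop (𝓝 0) ↔ ∀ μ, B.charpoly.IsRoot μ → ‖μ‖ < 1 := by
  constructor
  · intro h μ hμ
    have hμB : Module.End.HasEigenvalue (toLin' B) μ := by
      rwa [Module.End.hasEigenvalue_iff_mem_spectrum, spectrum_toLin',
        mem_spectrum_iff_isRoot_charpoly]
    obtain ⟨v, hv⟩ := hμB.exists_hasEigenvector
    have hpow (t : ℕ) : B ^ t *ᵥ v = μ ^ t • v := by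
      rw [← toLin'_apply, toLin'_pow, hv.pow_apply]
    have hlim : Tendsto (fun t : ℕ => ‖μ‖ ^ t * ‖v‖) atTop (𝓝 0) := by
      simpa [hpow, norm_smul] using (tendsto_iff_forall_tendsto_mulVec.1 h v).norm
    have hv0 : 0 < ‖v‖ := norm_pos_iff.2 hv.2
    simpa [abs_of_nonneg, hv0.ne'] using hlim.div_const ‖v‖
  · intro h
    rcases subsingleton_or_nontrivial (Matrix ι ι ℂ) with _ | _
    · simpa only [Subsingleton.elim _ (0 : Matrix ι ι ℂ)] using tendsto_const_nhds
    -- any submultiplicative norm will do; its topology is the entrywise one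
    let _ := Matrix.linftyOpNormedRing (n := ι) (α := ℂ)
    let _ := Matrix.linftyOpNormedAlgebra (n := ι) (R := ℂ) (α := ℂ)
    have : CompleteSpace (Matrix ι ι ℂ) := FiniteDimensional.complete ℂ _
    refine tendsto_pow_atTop_nhds_zero_of_spectralRadius_lt_one ?_
    simpa using spectrum.spectralRadius_lt_of_forall_lt B (r := 1) fun μ hμ => by
      simpa [← NNReal.coe_lt_coe] using h μ (mem_spectrum_iff_isRoot_charpoly.1 hμ)

theorem charpoly_sub_vecMulVec_mul_X_sub_C_one {K : Type*} [Field K] [Infinite K]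
    (A : Matrix ι ι K) {u v : ι → K} (hu : A *ᵥ u = u) (hvu : v ⬝ᵥ u = 1) :
    (A - vecMulVec u v).charpoly * (X - C 1) = A.charpoly * X := by
  have hbad : {x | A.charpoly.IsRoot x ∨ x = 1}.Finite :=
    (finite_setOfPred_isRoot A.charpoly_monic.ne_zero).union (Set.finite_singleton 1)
  refine eq_of_infinite_eval_eq _ _ (hbad.infinite_compl.mono ?_)
  intro x hx
  simp only [Set.mem_compl_iff, Set.mem_ofPred_eq, not_or, IsRoot.def, eval_charpoly] at hx
  obtain ⟨hdet, hx1⟩ := hx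
  set N := scalar ι x - A
  have hNu : N *ᵥ u = (x - 1) • u := by
    simp [N, sub_mulVec, hu, sub_smul]
  have hNinv : N⁻¹ *ᵥ u = (x - 1)⁻¹ • u := by
    rw [← inv_smul_smul₀ (sub_ne_zero.2 hx1) (N⁻¹ *ᵥ u), ← mulVec_smul, ← hNu, mulVec_mulVec,
      nonsing_inv_mul N (isUnit_iff_ne_zero.2 hdet), one_mulVec]
  have hdet_add : (N + vecMulVec u v).det = N.det * (1 + (x - 1)⁻¹) := by
    rw [vecMulVec_eq Unit, det_add_mul _ _ (isUnit_iff_ne_zero.2 hdet), Matrix.mul_assoc,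
      ← replicateCol_mulVec, hNinv]
    simp [replicateRow_mul_replicateCol_apply, hvu]
  simp only [Set.mem_ofPred_eq, eval_mul, eval_sub, eval_X, eval_C, eval_charpoly]
  have hcharmatrix : scalar ι x - (A - vecMulVec u v) = N + vecMulVec u v := by
    simp only [N]
    abel
  rw [hcharmatrix, hdet_add]
  field_simp [sub_ne_zero.2 hx1]
  ring

theorem tendsto_pow_nhds_vecMulVec_iff {M : Matrix ι ι ℝ} {u v : ι → ℝ} (hu : M *ᵥ u = u)
    (hv : v ᵥ* M = v) (hvu : v ⬝ᵥ u = 1) :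
    Tendsto (M ^ ·) atTop (𝓝 (vecMulVec u v)) ↔
      (M.map (algebraMap ℝ ℂ)).charpoly.rootMultiplicity 1 = 1 ∧
        ∀ μ : ℂ, (M.map (algebraMap ℝ ℂ)).charpoly.IsRoot μ → μ ≠ 1 → ‖μ‖ < 1 := by
  set φ := algebraMap ℝ ℂ
  have hP : IsIdempotentElem (vecMulVec u v) := by
    rw [IsIdempotentElem, vecMulVec_mul_vecMulVec, hvu, one_smul]
  rw [tendsto_pow_nhds_iff_tendsto_sub_pow_nhds_zero (by rw [mul_vecMulVec, hu])
      (by rw [vecMulVec_mul, hv]) hP,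
    Complex.isometry_ofReal.isEmbedding.matrix_map.tendsto_nhds_iff]
  have hmap (t : ℕ) :
      ((M - vecMulVec u v) ^ t).map Complex.ofReal = ((M - vecMulVec u v).map φ) ^ t :=
    Matrix.map_pow _ φ t
  have hdefl : (M - vecMulVec u v).map φ = M.map φ - vecMulVec (φ ∘ u) (φ ∘ v) := by
    ext i j
    simp [vecMulVec_apply]
  simp only [Function.comp_def, hmap, Matrix.map_zero _ Complex.ofReal_zero,
    tendsto_pow_atTop_nhds_zero_iff_forall_isRoot_charpoly]
  refine forall_norm_lt_one_iff_of_mul_X_sub_C_one_eq_mul_X (charpoly_monic _).ne_zero ?_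
  rw [hdefl]
  refine charpoly_sub_vecMulVec_mul_X_sub_C_one _ (funext fun i => ?_) ?_
  · rw [← RingHom.map_mulVec, hu, Function.comp_apply]
  · rw [← RingHom.map_dotProduct, hvu, map_one]

end Matrix

theorem stmt0 {n : ℕ} (W : Matrix (Fin n) (Fin n) ℝ) (w : Fin n → ℝ)
    (hW : Assumption1 W w) (K : Matrix (Fin n) (Fin n) ℝ) :
    (∀ x₀ : Fin n → ℝ,
        Tendsto (fun t : ℕ => ((W + K) ^ t) *ᵥ x₀) atTop
          (nhds ((w ⬝ᵥ x₀) • (1 : Fin n → ℝ)))) ↔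
      (K *ᵥ (1 : Fin n → ℝ) = 0 ∧
       w ᵥ* K = 0 ∧
       (((W + K).map (algebraMap ℝ ℂ)).charpoly.rootMultiplicity 1 = 1) ∧
       (∀ μ : ℂ, ((W + K).map (algebraMap ℝ ℂ)).charpoly.IsRoot μ → μ ≠ 1 →
          ‖μ‖ < 1)) := by
  obtain ⟨-, hW1, -, -, hwW, hw1⟩ := hW
  have hconsensus (x₀ : Fin n → ℝ) :
      (w ⬝ᵥ x₀) • (1 : Fin n → ℝ) = vecMulVec 1 w *ᵥ x₀ := by
    rw [vecMulVec_mulVec, op_smul_eq_smul]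
  simp_rw [hconsensus, ← tendsto_iff_forall_tendsto_mulVec]
  constructor
  · intro h
    have hM1 : (W + K) *ᵥ 1 = 1 := by
      have := congrArg (· *ᵥ (1 : Fin n → ℝ)) (mul_eq_of_tendsto_pow h)
      simpa only [mul_vecMulVec, vecMulVec_mulVec, hw1, MulOpposite.op_one, one_smul] using this
    have hwM : w ᵥ* (W + K) = w := funext fun j => by
      have hPM : vecMulVec 1 w * (W + K) = vecMulVec 1 w := mul_eq_of_tendsto_pow' h
      rw [vecMulVec_mul] at hPM
      simpa only [vecMulVec_apply, Pi.one_apply, one_mul] using congrFun₂ hPM j j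
    refine ⟨?_, ?_, (tendsto_pow_nhds_vecMulVec_iff hM1 hwM hw1).1 h⟩
    · rwa [add_mulVec, hW1, add_eq_left] at hM1
    · rwa [vecMul_add, hwW, add_eq_left] at hwM
  · rintro ⟨hK1, hwK, hspec⟩
    refine (tendsto_pow_nhds_vecMulVec_iff ?_ ?_ hw1).2 hspec
    · rw [add_mulVec, hW1, hK1, add_zero]
    · rw [vecMul_add, hwW, hwK, add_zero]
end

section
/- Let W ∈ ℝ^{n×n} satisfy Assumption 1 with normalized left Perron eigenvector w, and let K₀ ∈ ℝ^{n×n} be a nonzero matrix satisfying K₀·1 = 0 and wᵀK₀ = 0. Then there exists ε > 0 such that the matrix K = εK₀ satisfies: 1 is a simple eigenvalue of W+K and every other (complex) eigenvalue of W+K has modulus strictly less than 1. -/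
/-! Every `M = W + ε • K₀` fixes `1`, so deflating it by the rank-one matrix `1 wᵀ`
(where `wᵀ 1 = 1`) replaces the eigenvalue `1` by `0`: `(X - 1) χ(M - 1 wᵀ) = X χ(M)`.
Hence `1` is a simple eigenvalue of `M` with all other eigenvalues in the open unit disc
iff the spectrum of `M - 1 wᵀ` lies in the open unit disc. That is an open condition on `M`,
by upper hemicontinuity of the spectrum, and it holds at `ε = 0` by Assumption 1. -/

open Matrix Filter Polynomial

open Topology

theorem Matrix.det_add_vecMulVec {ι R : Type*} [Fintype ι] [DecidableEq ι] [CommRing R]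
    {A : Matrix ι ι R} (hA : IsUnit A.det) (u v : ι → R) :
    (A + vecMulVec u v).det = A.det * (1 + v ⬝ᵥ A⁻¹ *ᵥ u) := by
  rw [vecMulVec_eq Unit, det_add_replicateCol_mul_replicateRow hA, Matrix.mul_assoc,
    ← replicateCol_mulVec, det_unique (n := Unit)]
  simp

section Deflation

variable {ι K : Type*} [Fintype ι] [DecidableEq ι] [Field K] {M : Matrix ι ι K} {u v : ι → K}

theorem Matrix.sub_one_mul_det_scalar_sub_sub_vecMulVec (hv : M *ᵥ v = v) (huv : u ⬝ᵥ v = 1)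
    {x : K} (hx : IsUnit (scalar ι x - M).det) (hx1 : x ≠ 1) :
    (x - 1) * (scalar ι x - (M - vecMulVec v u)).det = x * (scalar ι x - M).det := by
  have hx1' : x - 1 ≠ 0 := sub_ne_zero.mpr hx1
  have hAv : (scalar ι x - M) *ᵥ v = (x - 1) • v := by
    rw [sub_mulVec, hv, scalar_apply, diagonal_const_mulVec, sub_smul, one_smul]
  have hres : (scalar ι x - M)⁻¹ *ᵥ v = (x - 1)⁻¹ • v := by
    let := invertibleOfIsUnitDet _ hx
    exact inv_mulVec_eq_vec (by rw [mulVec_smul, hAv, inv_smul_smul₀ hx1'])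
  rw [sub_sub_eq_add_sub, add_sub_right_comm, det_add_vecMulVec hx, hres, dotProduct_smul, huv,
    smul_eq_mul, mul_one, mul_left_comm, mul_add, mul_one, mul_inv_cancel₀ hx1']
  ring

theorem Matrix.X_sub_one_mul_charpoly_sub_vecMulVec [Infinite K] (hv : M *ᵥ v = v)
    (huv : u ⬝ᵥ v = 1) : (X - 1) * (M - vecMulVec v u).charpoly = X * M.charpoly := by
  refine eq_of_infinite_eval_eq _ _ <| Set.Infinite.mono (fun x hx => ?_)
    ((finite_setOfPred_isRoot M.charpoly_monic.ne_zero).union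
      (Set.finite_singleton 1)).infinite_compl
  obtain ⟨hx, hx1⟩ := not_or.mp hx
  have hdet : IsUnit (scalar ι x - M).det := by
    rw [isUnit_iff_ne_zero, ← eval_charpoly]
    exact hx
  simpa [eval_charpoly] using sub_one_mul_det_scalar_sub_sub_vecMulVec hv huv hdet hx1

end Deflation

theorem Polynomial.rootMultiplicity_one_eq_of_X_sub_one_mul_eq {R : Type*} [CommRing R]
    [IsDomain R] {p q : R[X]} (h : (X - 1) * q = X * p) (hq : q ≠ 0) :
    p.rootMultiplicity 1 = q.rootMultiplicity 1 + 1 := by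
  have hne : (X - 1) * q ≠ 0 := mul_ne_zero (by simpa using X_sub_C_ne_zero (1 : R)) hq
  have hmul := congrArg (rootMultiplicity 1) h
  rw [rootMultiplicity_mul hne, rootMultiplicity_mul (h ▸ hne), ← C_1,
    rootMultiplicity_X_sub_C_self, rootMultiplicity_eq_zero (p := X) (by simp)] at hmul
  omega

attribute [local instance] Matrix.linftyOpNormedRing Matrix.linftyOpNormedAlgebra

def Matrix.HasDominantSimpleEigenvalueOne {ι 𝕜 : Type*} [Fintype ι] [DecidableEq ι]
    [NormedField 𝕜] (M : Matrix ι ι 𝕜) : Prop :=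
  M.charpoly.rootMultiplicity 1 = 1 ∧ ∀ μ, M.charpoly.IsRoot μ → μ ≠ 1 → ‖μ‖ < 1

section Spectrum

variable {ι : Type*} [Fintype ι] [DecidableEq ι]

theorem Matrix.hasDominantSimpleEigenvalueOne_iff_spectrum_subset_ball {𝕜 : Type*}
    [NormedField 𝕜] [Infinite 𝕜]
    {M : Matrix ι ι 𝕜} {u v : ι → 𝕜} (hv : M *ᵥ v = v) (huv : u ⬝ᵥ v = 1) :
    M.HasDominantSimpleEigenvalueOne ↔ spectrum 𝕜 (M - vecMulVec v u) ⊆ Metric.ball 0 1 := by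
  have h := X_sub_one_mul_charpoly_sub_vecMulVec hv huv
  set q := (M - vecMulVec v u).charpoly
  have hq : q ≠ 0 := (charpoly_monic _).ne_zero
  have heval (μ : 𝕜) : (μ - 1) * q.eval μ = μ * M.charpoly.eval μ := by
    simpa using congrArg (eval μ) h
  simp only [Set.subset_def, mem_spectrum_iff_isRoot_charpoly, mem_ball_zero_iff]
  constructor
  · rintro ⟨h1, hlt⟩ μ hμ
    have hμ1 : μ ≠ 1 := by
      rintro rfl
      have := (rootMultiplicity_pos hq).2 hμ
      have := rootMultiplicity_one_eq_of_X_sub_one_mul_eq h hq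
      omega
    by_cases hμ0 : μ = 0
    · simp [hμ0]
    refine hlt μ ?_ hμ1
    have := heval μ
    rw [hμ.eq_zero, mul_zero, eq_comm, mul_eq_zero] at this
    exact this.resolve_left hμ0
  · intro hσ
    have hq1 : ¬ q.IsRoot 1 := fun h1 => by simpa using hσ 1 h1
    refine ⟨by rw [rootMultiplicity_one_eq_of_X_sub_one_mul_eq h hq, rootMultiplicity_eq_zero hq1],
      fun μ hμ hμ1 => hσ μ ?_⟩
    have := heval μ
    rw [hμ.eq_zero, mul_zero, mul_eq_zero] at this
    exact this.resolve_left (sub_ne_zero.2 hμ1)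

theorem Matrix.eventually_hasDominantSimpleEigenvalueOne {𝕜 : Type*}
    [NontriviallyNormedField 𝕜] [ProperSpace 𝕜] {X : Type*} [TopologicalSpace X] {f : X → Matrix ι ι 𝕜} {x₀ : X} (hf : ContinuousAt f x₀)
    {u v : ι → 𝕜} (hv : ∀ x, f x *ᵥ v = v) (huv : u ⬝ᵥ v = 1)
    (h₀ : (f x₀).HasDominantSimpleEigenvalueOne) :
    ∀ᶠ x in 𝓝 x₀, (f x).HasDominantSimpleEigenvalueOne := by
  -- instance search does not find completeness for the `L∞`-operator norm on a general `𝕜`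
  have hσ := (@upperHemicontinuous_spectrum 𝕜 (Matrix ι ι 𝕜) _ _ _ _
    (FiniteDimensional.complete 𝕜 _)).forall_isOpen _ _ Metric.isOpen_ball
    ((hasDominantSimpleEigenvalueOne_iff_spectrum_subset_ball (hv x₀) huv).1 h₀)
  filter_upwards [(hf.sub continuousAt_const).eventually hσ] with x hx
  exact (hasDominantSimpleEigenvalueOne_iff_spectrum_subset_ball (hv x) huv).2 hx

end Spectrum

theorem stmt1_general {n : ℕ} (W : Matrix (Fin n) (Fin n) ℝ) (w : Fin n → ℝ)
    (hW : Assumption1 W w) (K₀ : Matrix (Fin n) (Fin n) ℝ)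
    (hK₀1 : K₀ *ᵥ (1 : Fin n → ℝ) = 0) :
    ∃ ε : ℝ, 0 < ε ∧
      (((W + ε • K₀).map (algebraMap ℝ ℂ)).charpoly.rootMultiplicity 1 = 1) ∧
      (∀ μ : ℂ, ((W + ε • K₀).map (algebraMap ℝ ℂ)).charpoly.IsRoot μ → μ ≠ 1 →
        ‖μ‖ < 1) := by
  obtain ⟨-, hW1, hmult, hroots, -, hw1⟩ := hW
  set M : ℝ → Matrix (Fin n) (Fin n) ℂ := fun ε => (W + ε • K₀).map (algebraMap ℝ ℂ)
  have hM : Continuous M := by fun_prop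
  have hM1 (ε : ℝ) : M ε *ᵥ 1 = 1 := by
    have hfix : (W + ε • K₀) *ᵥ 1 = 1 := by
      rw [add_mulVec, smul_mulVec, hK₀1, smul_zero, add_zero, hW1]
    ext i
    simpa [M] using (RingHom.map_mulVec (algebraMap ℝ ℂ) _ 1 i).symm.trans
      (congrArg _ (congrFun hfix i))
  have hw1' : (algebraMap ℝ ℂ ∘ w) ⬝ᵥ 1 = 1 := by
    have := (RingHom.map_dotProduct (algebraMap ℝ ℂ) w 1).symm
    rwa [hw1, map_one] at this
  have hM0 : (M 0).HasDominantSimpleEigenvalueOne := by simpa [M] using ⟨hmult, hroots⟩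
  have hev : ∀ᶠ ε in 𝓝[>] 0, (M ε).HasDominantSimpleEigenvalueOne :=
    nhdsWithin_le_nhds (eventually_hasDominantSimpleEigenvalueOne hM.continuousAt hM1 hw1' hM0)
  obtain ⟨ε, hεpos, hε⟩ := (eventually_mem_nhdsWithin.and hev).exists
  exact ⟨ε, hεpos, hε⟩

theorem stmt1 {n : ℕ} (W : Matrix (Fin n) (Fin n) ℝ) (w : Fin n → ℝ)
    (hW : Assumption1 W w) (K₀ : Matrix (Fin n) (Fin n) ℝ) (hK₀ : K₀ ≠ 0)
    (hK₀1 : K₀ *ᵥ (1 : Fin n → ℝ) = 0) (hwK₀ : w ᵥ* K₀ = 0) :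
    ∃ ε : ℝ, 0 < ε ∧
      (((W + ε • K₀).map (algebraMap ℝ ℂ)).charpoly.rootMultiplicity 1 = 1) ∧
      (∀ μ : ℂ, ((W + ε • K₀).map (algebraMap ℝ ℂ)).charpoly.IsRoot μ → μ ≠ 1 →
        ‖μ‖ < 1) :=
  stmt1_general W w hW K₀ hK₀1
end

section
/- Let W ∈ ℝ^{n×n} satisfy Assumption 1 with normalized left Perron eigenvector w. Let x₀ ∈ ℝ^n satisfy wᵀx₀ ≠ 0, let q ∈ ℝ^n satisfy qᵀ1 = 0 and qᵀx₀ ≠ 0, set β = (wᵀWx₀)/(wᵀx₀), p = (βx₀ − Wx₀)/(qᵀx₀), and K = pqᵀ. Then K·1 = 0, wᵀK = 0, and (W+K)x₀ = βx₀; consequently, for every T ≥ 1, the matrix X_a = [x₀, (W+K)x₀, …, (W+K)^{T−1}x₀] has rank at most 1. -/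
open Matrix

namespace Matrix

variable {R n : Type*} [CommSemiring R] [Fintype n] [DecidableEq n]

def krylovMatrix (A : Matrix n n R) (x : n → R) (T : ℕ) : Matrix n (Fin T) R :=
  of fun i t => (A ^ (t : ℕ) *ᵥ x) i

theorem pow_mulVec_eq_smul_of_mulVec_eq_smul {A : Matrix n n R} {x : n → R} {c : R}
    (h : A *ᵥ x = c • x) (t : ℕ) : A ^ t *ᵥ x = c ^ t • x := by
  induction t with
  | zero => simp
  | succ t ih => rw [pow_succ', ← mulVec_mulVec, ih, mulVec_smul, h, smul_smul, ← pow_succ]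

theorem krylovMatrix_eq_vecMulVec_of_mulVec_eq_smul {A : Matrix n n R} {x : n → R} {c : R}
    (h : A *ᵥ x = c • x) (T : ℕ) :
    krylovMatrix A x T = vecMulVec x fun t : Fin T => c ^ (t : ℕ) := by
  ext i t
  simp [krylovMatrix, pow_mulVec_eq_smul_of_mulVec_eq_smul h, vecMulVec_apply, mul_comm]

theorem rank_krylovMatrix_le_one_of_mulVec_eq_smul [StrongRankCondition R]
    {A : Matrix n n R} {x : n → R} {c : R} (h : A *ᵥ x = c • x) (T : ℕ) :
    (krylovMatrix A x T).rank ≤ 1 := by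
  rw [krylovMatrix_eq_vecMulVec_of_mulVec_eq_smul h]
  exact rank_vecMulVec_le _ _

end Matrix

theorem stmt8_general {n : ℕ} (W : Matrix (Fin n) (Fin n) ℝ) (w : Fin n → ℝ)
    (x₀ q : Fin n → ℝ)
    (hwx₀ : w ⬝ᵥ x₀ ≠ 0) (hq1 : q ⬝ᵥ (1 : Fin n → ℝ) = 0) (hqx₀ : q ⬝ᵥ x₀ ≠ 0) :
    ∀ (β : ℝ), β = (w ⬝ᵥ (W *ᵥ x₀)) / (w ⬝ᵥ x₀) →
    ∀ (p : Fin n → ℝ), p = (q ⬝ᵥ x₀)⁻¹ • (β • x₀ - W *ᵥ x₀) →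
    ∀ (K : Matrix (Fin n) (Fin n) ℝ), K = vecMulVec p q →
      K *ᵥ (1 : Fin n → ℝ) = 0 ∧
      w ᵥ* K = 0 ∧
      (W + K) *ᵥ x₀ = β • x₀ ∧
      (∀ T : ℕ, 1 ≤ T →
        (Matrix.of fun (i : Fin n) (t : Fin T) => (((W + K) ^ (t : ℕ)) *ᵥ x₀) i).rank
          ≤ 1) := by
  intro β hβ p hp K hK
  have hKv (v : Fin n → ℝ) : K *ᵥ v = (q ⬝ᵥ v) • p := by
    rw [hK, vecMulVec_mulVec, op_smul_eq_smul]
  have hwp : w ⬝ᵥ p = 0 := by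
    rw [hp, dotProduct_smul, dotProduct_sub, dotProduct_smul, hβ, smul_eq_mul,
      smul_eq_mul, div_mul_cancel₀ _ hwx₀, sub_self, mul_zero]
  have hx₀ : (W + K) *ᵥ x₀ = β • x₀ := by
    rw [add_mulVec, hKv, hp, smul_inv_smul₀ hqx₀, add_sub_cancel]
  refine ⟨by rw [hKv, hq1, zero_smul], by rw [hK, vecMul_vecMulVec, hwp, zero_smul], hx₀,
    fun T _ => rank_krylovMatrix_le_one_of_mulVec_eq_smul hx₀ T⟩

/-- Rank-one feedback construction: with `β = (wᵀWx₀)/(wᵀx₀)`,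
`p = (βx₀ − Wx₀)/(qᵀx₀)` and `K = pqᵀ`, we get `K𝟙 = 0`, `wᵀK = 0`,
`(W+K)x₀ = βx₀`, hence the data matrix `X_a` has rank at most `1`. -/
theorem stmt8 {n : ℕ} (W : Matrix (Fin n) (Fin n) ℝ) (w : Fin n → ℝ)
    (hW : Assumption1 W w) (x₀ q : Fin n → ℝ)
    (hwx₀ : w ⬝ᵥ x₀ ≠ 0) (hq1 : q ⬝ᵥ (1 : Fin n → ℝ) = 0) (hqx₀ : q ⬝ᵥ x₀ ≠ 0) :
    ∀ (β : ℝ), β = (w ⬝ᵥ (W *ᵥ x₀)) / (w ⬝ᵥ x₀) →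
    ∀ (p : Fin n → ℝ), p = (q ⬝ᵥ x₀)⁻¹ • (β • x₀ - W *ᵥ x₀) →
    ∀ (K : Matrix (Fin n) (Fin n) ℝ), K = vecMulVec p q →
      K *ᵥ (1 : Fin n → ℝ) = 0 ∧
      w ᵥ* K = 0 ∧
      (W + K) *ᵥ x₀ = β • x₀ ∧
      (∀ T : ℕ, 1 ≤ T →
        (Matrix.of fun (i : Fin n) (t : Fin T) => (((W + K) ^ (t : ℕ)) *ᵥ x₀) i).rank
          ≤ 1) :=
  stmt8_general W w x₀ q hwx₀ hq1 hqx₀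
end

section
/- Let W ∈ ℝ^{n×n} satisfy Assumption 1 with normalized left Perron eigenvector w, let n ≥ 2, and let x₀ ∈ ℝ^n be a nonzero vector not contained in any proper W-invariant subspace. Then there exists a matrix K ∈ ℝ^{n×n} with K·1 = 0 and wᵀK = 0 such that for every T ≥ n, the matrix X_a = [x₀, (W+K)x₀, …, (W+K)^{T−1}x₀] satisfies rank(X_a) < n. -/
open Matrix

/-!
The attack is a rank-one feedback `K = (x₀ - W x₀) vᵀ`, where `v ⊥ 𝟙` and `v ⬝ x₀ = 1`: then
`K 𝟙 = 0`, `wᵀ K = (wᵀ (I - W) x₀) vᵀ = 0`, and `(W + K) x₀ = x₀`. (If `x₀ ∈ span 𝟙`, no such `v`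
exists, but then `x₀` is already fixed by `W` and `K = 0` works.) Every column of the data matrix
is then `x₀`, so its rank is at most `1 < n`.
-/

variable {𝕜 ι : Type*} [Field 𝕜] [Fintype ι]

theorem exists_dotProduct_eq_zero_and_eq_one {e x : ι → 𝕜} (hx : x ∉ 𝕜 ∙ e) :
    ∃ v : ι → 𝕜, v ⬝ᵥ e = 0 ∧ v ⬝ᵥ x = 1 := by
  classical
  obtain ⟨f, hfx, hmap⟩ := Submodule.exists_dual_map_eq_bot_of_notMem hx inferInstance
  have hfe : f e = 0 :=
    LinearMap.mem_ker.mp (LinearMap.le_ker_iff_map.mpr hmap (Submodule.mem_span_singleton_self e))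
  have hf : ∀ y, (dotProductEquiv 𝕜 ι).symm f ⬝ᵥ y = f y := fun y =>
    congrArg (· y) ((dotProductEquiv 𝕜 ι).apply_symm_apply f)
  refine ⟨(f x)⁻¹ • (dotProductEquiv 𝕜 ι).symm f, ?_, ?_⟩
  · rw [smul_dotProduct, hf, hfe, smul_zero]
  · rw [smul_dotProduct, hf, smul_eq_mul, inv_mul_cancel₀ hfx]

theorem exists_perturbation_add_mulVec_eq_self {W : Matrix ι ι 𝕜} {e w : ι → 𝕜}
    (he : W *ᵥ e = e) (hw : w ᵥ* W = w) (x : ι → 𝕜) :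
    ∃ K : Matrix ι ι 𝕜, K *ᵥ e = 0 ∧ w ᵥ* K = 0 ∧ (W + K) *ᵥ x = x := by
  by_cases hx : x ∈ 𝕜 ∙ e
  · obtain ⟨c, rfl⟩ := Submodule.mem_span_singleton.mp hx
    exact ⟨0, zero_mulVec e, vecMul_zero w, by rw [add_zero, mulVec_smul, he]⟩
  obtain ⟨v, hve, hvx⟩ := exists_dotProduct_eq_zero_and_eq_one hx
  refine ⟨vecMulVec (x - W *ᵥ x) v, ?_, ?_, ?_⟩
  · rw [vecMulVec_mulVec, hve, MulOpposite.op_zero, zero_smul]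
  · rw [vecMul_vecMulVec, dotProduct_sub, dotProduct_mulVec, hw, sub_self, zero_smul]
  · rw [add_mulVec, vecMulVec_mulVec, hvx, MulOpposite.op_one, one_smul, add_sub_cancel]

variable [DecidableEq ι]

theorem pow_mulVec_eq_self {A : Matrix ι ι 𝕜} {x : ι → 𝕜} (hx : A *ᵥ x = x) (k : ℕ) :
    (A ^ k) *ᵥ x = x := by
  induction k with
  | zero => rw [pow_zero, one_mulVec]
  | succ k ih => rw [pow_succ, ← mulVec_mulVec, hx, ih]

theorem rank_krylov_le_one_of_mulVec_eq_self {A : Matrix ι ι 𝕜} {x : ι → 𝕜} (hx : A *ᵥ x = x)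
    (T : ℕ) :
    (Matrix.of fun (i : ι) (t : Fin T) => ((A ^ (t : ℕ)) *ᵥ x) i).rank ≤ 1 := by
  have hcols : (Matrix.of fun (i : ι) (t : Fin T) => ((A ^ (t : ℕ)) *ᵥ x) i) = vecMulVec x 1 := by
    ext i t
    rw [of_apply, pow_mulVec_eq_self hx, vecMulVec_apply, Pi.one_apply, mul_one]
  rw [hcols]
  exact rank_vecMulVec_le x 1

theorem stmt9_general {n : ℕ} (hn : 2 ≤ n) (W : Matrix (Fin n) (Fin n) ℝ) (w : Fin n → ℝ)
    (hW : Assumption1 W w) (x₀ : Fin n → ℝ) :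
    ∃ K : Matrix (Fin n) (Fin n) ℝ,
      K *ᵥ (1 : Fin n → ℝ) = 0 ∧
      w ᵥ* K = 0 ∧
      (∀ T : ℕ, n ≤ T →
        (Matrix.of fun (i : Fin n) (t : Fin T) => (((W + K) ^ (t : ℕ)) *ᵥ x₀) i).rank
          < n) := by
  obtain ⟨-, hW1, -, -, hwW, -⟩ := hW
  obtain ⟨K, hK1, hwK, hfix⟩ := exists_perturbation_add_mulVec_eq_self hW1 hwW x₀
  exact ⟨K, hK1, hwK, fun T _ =>
    (rank_krylov_le_one_of_mulVec_eq_self hfix T).trans_lt (by omega)⟩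

/-- If the nonzero initial state `x₀` lies in no proper `W`-invariant subspace, then a
feedback `K` with `K𝟙 = 0` and `wᵀK = 0` exists rendering the data matrix
`X_a = [x₀, (W+K)x₀, …, (W+K)^(T-1)x₀]` rank-deficient for all `T ≥ n`. -/
theorem stmt9 {n : ℕ} (hn : 2 ≤ n) (W : Matrix (Fin n) (Fin n) ℝ) (w : Fin n → ℝ)
    (hW : Assumption1 W w) (x₀ : Fin n → ℝ) (hx₀ : x₀ ≠ 0)
    (hx₀inv : ¬ ∃ S : Submodule ℝ (Fin n → ℝ),
        (∀ y ∈ S, W *ᵥ y ∈ S) ∧ S ≠ ⊥ ∧ S ≠ ⊤ ∧ x₀ ∈ S) :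
    ∃ K : Matrix (Fin n) (Fin n) ℝ,
      K *ᵥ (1 : Fin n → ℝ) = 0 ∧
      w ᵥ* K = 0 ∧
      (∀ T : ℕ, n ≤ T →
        (Matrix.of fun (i : Fin n) (t : Fin T) => (((W + K) ^ (t : ℕ)) *ᵥ x₀) i).rank
          < n) :=
  stmt9_general hn W w hW x₀
end

section
/- Let W ∈ ℝ^{n×n} satisfy Assumption 1 with normalized left Perron eigenvector w, and let r_max = max{|λ| : λ is a (complex) eigenvalue of W, λ ≠ 1} (which is < 1). For any real α with 0 < α < (1 − r_max)/(1 + r_max), the feedback matrix K = −α(I − W) satisfies: (i) K·1 = 0 and wᵀK = 0; (ii) K_{ij} = 0 whenever W_{ij} = 0 with i ≠ j; (iii) 1 is a simple eigenvalue of W+K = (1+α)W − αI and every other eigenvalue of W+K has modulus strictly less than 1; and (iv) for every x₀ ∈ ℝ^n, lim_{t→∞} (W+K)^t x₀ = (wᵀx₀)·1. -/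
/-!
Over `ℂ`, `W + K = (1 + α) W - α I` is the affine image `c W + d I` of `W` with `c + d = 1`, so
its eigenvalues are the `(1 + α) λ - α`, with the same multiplicities, and `1` stays fixed; for
`λ ≠ 1`, `|(1 + α) λ - α| ≤ (1 + α) r_max + α < 1` is exactly the condition on `α`.

For the convergence of `A = W + K`, the projection `P = 1 wᵀ` satisfies `A P = P A = P² = P`, so
`A^(t+1) = (A - P)^(t+1) + P`. Taking determinants in `(X - (A - P)) (X - P) = X (X - A)`, with
`χ_P = X^(n-1) (X - 1)`, gives `(X - 1) χ_{A-P} = X χ_A`; as `1` is a simple root of `χ_A`, every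
eigenvalue of `A - P` is `0` or an eigenvalue `≠ 1` of `A`. So `A - P` has spectral radius `< 1`,
and `(A - P)^t → 0` by Gelfand's formula.
-/

open Matrix Filter

open Polynomial Topology

theorem add_pow_succ_of_mul_eq_zero {α : Type*} [Ring α] {b p : α} (hbp : b * p = 0)
    (hpb : p * b = 0) (hp : IsIdempotentElem p) (t : ℕ) :
    (b + p) ^ (t + 1) = b ^ (t + 1) + p := by
  induction t with
  | zero => simp
  | succ t ih =>
    have hbtp : b ^ (t + 1) * p = 0 := by rw [pow_succ, mul_assoc, hbp, mul_zero]
    rw [pow_succ, ih, add_mul, mul_add, mul_add, hbtp, hpb, hp.eq, ← pow_succ, add_zero, zero_add]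

theorem Polynomial.eq_zero_or_isRoot_of_mul_X_sub_C_eq {K : Type*} [Field K] {p q : K[X]}
    {a μ : K} (ha : a ≠ 0) (h : p * (X - C a) = X * q) (hq : q.rootMultiplicity a = 1)
    (hμ : p.IsRoot μ) : μ = 0 ∨ (μ ≠ a ∧ q.IsRoot μ) := by
  have hq0 : q ≠ 0 := by rintro rfl; simp at hq
  have hXq : X * q ≠ 0 := mul_ne_zero X_ne_zero hq0
  have heval := congrArg (eval μ) h
  simp only [eval_mul, eval_sub, eval_X, eval_C, hμ.eq_zero, zero_mul] at heval
  refine (mul_eq_zero.mp heval.symm).imp_right fun hqμ => ⟨?_, hqμ⟩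
  rintro rfl
  have hp0 : p ≠ 0 := by rintro rfl; rw [zero_mul] at h; exact hXq h.symm
  have hmult := congrArg (rootMultiplicity μ) h
  rw [rootMultiplicity_mul (h ▸ hXq), rootMultiplicity_mul hXq, rootMultiplicity_X_sub_C_self,
    hq, rootMultiplicity_eq_zero (p := X) (by simpa using ha)] at hmult
  have := (rootMultiplicity_pos hp0).mpr hμ
  omega

theorem tendsto_pow_atTop_nhds_zero_of_forall_spectrum_norm_lt_one {A : Type*} [NormedRing A]
    [NormedAlgebra ℂ A] [CompleteSpace A] [Nontrivial A] {a : A}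
    (h : ∀ z ∈ spectrum ℂ a, ‖z‖ < 1) : Tendsto (a ^ ·) atTop (𝓝 0) := by
  have hρ : spectralRadius ℂ a < (1 : NNReal) :=
    spectrum.spectralRadius_lt_of_forall_lt a fun z hz => by exact_mod_cast h z hz
  obtain ⟨c, hρc, hc1⟩ := ENNReal.lt_iff_exists_nnreal_btwn.mp hρ
  have hev : ∀ᶠ t : ℕ in atTop, ‖a ^ t‖₊ ≤ c ^ t := by
    filter_upwards [(spectrum.pow_nnnorm_pow_one_div_tendsto_nhds_spectralRadius a).eventually
      (gt_mem_nhds hρc), eventually_ge_atTop 1] with t ht ht1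
    have htpos : (0 : ℝ) < t := by exact_mod_cast ht1
    rw [one_div, ← ENNReal.coe_rpow_of_nonneg _ (inv_nonneg.mpr htpos.le), ENNReal.coe_lt_coe,
      NNReal.rpow_inv_lt_iff htpos, NNReal.rpow_natCast] at ht
    exact ht.le
  refine squeeze_zero_norm' ?_ (tendsto_pow_atTop_nhds_zero_of_lt_one c.2 (by exact_mod_cast hc1))
  filter_upwards [hev] with t ht
  exact_mod_cast ht

theorem one_add_mul_add_lt_one_of_lt_div {r α : ℝ} (hα0 : 0 < α)
    (hα : α < (1 - r) / (1 + r)) : (1 + α) * r + α < 1 := by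
  have hr : 0 < 1 + r := by
    by_contra! hr
    linarith [div_nonpos_of_nonneg_of_nonpos (by linarith : 0 ≤ 1 - r) hr]
  rw [lt_div_iff₀ hr] at hα
  linarith

namespace Matrix

variable {n R : Type*} [Fintype n] [DecidableEq n] [CommRing R]

theorem charmatrix_sub_mul_charmatrix {A P : Matrix n n R} (hAP : A * P = P)
    (hP : IsIdempotentElem P) :
    charmatrix (A - P) * charmatrix P = (X : R[X]) • charmatrix A := by
  have hAP' : C.mapMatrix A * C.mapMatrix P = C.mapMatrix P := by rw [← map_mul, hAP]
  have hP' : C.mapMatrix P * C.mapMatrix P = C.mapMatrix P := by rw [← map_mul, hP.eq]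
  simp only [charmatrix, map_sub, sub_mul, mul_sub, hAP', hP', smul_sub, scalar_apply,
    ← smul_eq_diagonal_mul, ← smul_eq_mul_diagonal]
  abel

theorem charpoly_sub_mul_charpoly {A P : Matrix n n R} (hAP : A * P = P)
    (hP : IsIdempotentElem P) :
    (A - P).charpoly * P.charpoly = X ^ Fintype.card n * A.charpoly := by
  rw [charpoly, charpoly, charpoly, ← det_mul, charmatrix_sub_mul_charmatrix hAP hP, det_smul]

theorem charpoly_sub_vecMulVec_mul [Nontrivial R] {A : Matrix n n R} {v w : n → R}
    (hAv : A *ᵥ v = v) (hwv : w ⬝ᵥ v = 1) :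
    (A - vecMulVec v w).charpoly * (X - 1) = X * A.charpoly := by
  obtain ⟨m, hm⟩ : ∃ m, Fintype.card n = m + 1 := by
    refine Nat.exists_eq_add_one.mpr (Fintype.card_pos_iff.mpr ?_)
    by_contra h
    rw [not_nonempty_iff] at h
    simp at hwv
  have hP : IsIdempotentElem (vecMulVec v w) := by
    rw [IsIdempotentElem, vecMulVec_mul_vecMulVec, hwv, one_smul]
  have key := charpoly_sub_mul_charpoly (by rw [mul_vecMulVec, hAv]) hP
  rw [charpoly_vecMulVec, dotProduct_comm, hwv, one_smul, hm, Nat.add_sub_cancel] at key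
  refine (isRegular_X_pow m).left ?_
  linear_combination key

theorem charpoly_smul_add_scalar_comp (M : Matrix n n R) (c d : R) :
    (c • M + scalar n d).charpoly.comp (C c * X + C d) = C c ^ Fintype.card n * M.charpoly := by
  have hmat : (compRingHom (C c * X + C d)).mapMatrix (charmatrix (c • M + scalar n d)) =
      C c • charmatrix M := by
    ext i j
    obtain rfl | hij := eq_or_ne i j <;> simp [*, mul_sub]
  rw [charpoly, ← coe_compRingHom_apply, RingHom.map_det, hmat, det_smul, charpoly]

theorem rootMultiplicity_charpoly_smul_add_scalar {K : Type*} [Field K] (M : Matrix n n K)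
    {c : K} (hc : c ≠ 0) (d x : K) :
    (c • M + scalar n d).charpoly.rootMultiplicity (c * x + d) =
      M.charpoly.rootMultiplicity x := by
  have hne : C c ^ Fintype.card n * M.charpoly ≠ 0 :=
    mul_ne_zero (pow_ne_zero _ (C_ne_zero.mpr hc)) M.charpoly_monic.ne_zero
  rw [← rootMultiplicity_comp_C_mul_X_add_C _ c d x hc.isUnit, charpoly_smul_add_scalar_comp,
    rootMultiplicity_mul hne, ← C_pow, rootMultiplicity_C, zero_add]

theorem isRoot_charpoly_smul_add_scalar_iff {K : Type*} [Field K] (M : Matrix n n K)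
    {c : K} (hc : c ≠ 0) (d x : K) :
    (c • M + scalar n d).charpoly.IsRoot (c * x + d) ↔ M.charpoly.IsRoot x := by
  rw [← rootMultiplicity_pos (charpoly_monic _).ne_zero, ← rootMultiplicity_pos
    (charpoly_monic _).ne_zero, rootMultiplicity_charpoly_smul_add_scalar M hc]

attribute [local instance] Matrix.linftyOpNormedRing Matrix.linftyOpNormedAlgebra in
theorem tendsto_pow_atTop_nhds_zero_of_isRoot_charpoly_map {B : Matrix n n ℝ}
    (h : ∀ μ : ℂ, (B.map (algebraMap ℝ ℂ)).charpoly.IsRoot μ → ‖μ‖ < 1) :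
    Tendsto (B ^ ·) atTop (𝓝 0) := by
  cases isEmpty_or_nonempty n
  · simpa only [Subsingleton.elim _ (0 : Matrix n n ℝ)] using tendsto_const_nhds
  have hc : Tendsto ((B.map (algebraMap ℝ ℂ)) ^ ·) atTop (𝓝 0) :=
    tendsto_pow_atTop_nhds_zero_of_forall_spectrum_norm_lt_one fun z hz =>
      h z (mem_spectrum_iff_isRoot_charpoly.mp hz)
  have hre := ((continuous_id.matrix_map Complex.continuous_re).tendsto 0).comp hc
  convert hre using 1
  · ext t : 1
    rw [Function.comp_apply, ← RingHom.mapMatrix_apply, ← map_pow, RingHom.mapMatrix_apply, id,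
      Matrix.map_map]
    ext i j
    simp
  · simp

theorem tendsto_pow_mulVec_nhds_dotProduct_smul_one {A : Matrix n n ℝ} {w : n → ℝ}
    (hA1 : A *ᵥ 1 = 1) (hwA : w ᵥ* A = w) (hw1 : w ⬝ᵥ 1 = 1)
    (hmult : (A.map (algebraMap ℝ ℂ)).charpoly.rootMultiplicity 1 = 1)
    (hlt : ∀ μ : ℂ, (A.map (algebraMap ℝ ℂ)).charpoly.IsRoot μ → μ ≠ 1 → ‖μ‖ < 1)
    (x : n → ℝ) : Tendsto (fun t : ℕ => A ^ t *ᵥ x) atTop (𝓝 ((w ⬝ᵥ x) • 1)) := by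
  set P := vecMulVec 1 w
  have hAP : A * P = P := by rw [mul_vecMulVec, hA1]
  have hPA : P * A = P := by rw [vecMulVec_mul, hwA]
  have hP : IsIdempotentElem P := by rw [IsIdempotentElem, vecMulVec_mul_vecMulVec, hw1, one_smul]
  have hchar : ((A - P).map (algebraMap ℝ ℂ)).charpoly * (X - C 1) =
      X * (A.map (algebraMap ℝ ℂ)).charpoly := by
    have := congrArg (Polynomial.map (algebraMap ℝ ℂ)) (charpoly_sub_vecMulVec_mul hA1 hw1)
    rwa [Polynomial.map_mul, Polynomial.map_mul, Polynomial.map_sub, map_X, Polynomial.map_one,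
      ← charpoly_map, ← charpoly_map, ← C_1] at this
  have hB : Tendsto ((A - P) ^ ·) atTop (𝓝 0) :=
    tendsto_pow_atTop_nhds_zero_of_isRoot_charpoly_map fun μ hμ =>
      (eq_zero_or_isRoot_of_mul_X_sub_C_eq one_ne_zero hchar hmult hμ).elim
        (fun h => by simp [h]) fun h => hlt μ h.2 h.1
  have hpow (t : ℕ) : A ^ (t + 1) *ᵥ x = (A - P) ^ (t + 1) *ᵥ x + (w ⬝ᵥ x) • 1 := by
    have hBP : (A - P) * P = 0 := by rw [sub_mul, hAP, hP.eq, sub_self]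
    have hPB : P * (A - P) = 0 := by rw [mul_sub, hPA, hP.eq, sub_self]
    calc A ^ (t + 1) *ᵥ x = ((A - P) + P) ^ (t + 1) *ᵥ x := by rw [sub_add_cancel]
      _ = _ := by
        rw [add_pow_succ_of_mul_eq_zero hBP hPB hP, add_mulVec, vecMulVec_mulVec, op_smul_eq_smul]
  rw [← tendsto_add_atTop_iff_nat 1]
  simp_rw [hpow]
  have hBx := ((continuous_id.matrix_mulVec (continuous_const (y := x))).tendsto 0).comp
    (hB.comp (tendsto_add_atTop_nat 1))
  simpa using hBx.add_const ((w ⬝ᵥ x) • (1 : n → ℝ))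

section Feedback

variable (W : Matrix n n ℝ) (α : ℝ)

theorem map_add_neg_smul_one_sub :
    (W + -α • (1 - W)).map (algebraMap ℝ ℂ) =
      ((1 + α : ℝ) : ℂ) • W.map (algebraMap ℝ ℂ) + scalar n (-(α : ℂ)) := by
  ext i j
  obtain rfl | hij := eq_or_ne i j <;> simp [*] <;> ring

theorem rootMultiplicity_one_charpoly_map_add_neg_smul_one_sub (hα : 1 + α ≠ 0) :
    ((W + -α • (1 - W)).map (algebraMap ℝ ℂ)).charpoly.rootMultiplicity 1 =
      (W.map (algebraMap ℝ ℂ)).charpoly.rootMultiplicity 1 := by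
  have hc : ((1 + α : ℝ) : ℂ) ≠ 0 := Complex.ofReal_ne_zero.mpr hα
  have h1 : ((1 + α : ℝ) : ℂ) * 1 + -α = 1 := by push_cast; ring
  rw [map_add_neg_smul_one_sub,
    ← rootMultiplicity_charpoly_smul_add_scalar (W.map (algebraMap ℝ ℂ)) hc (-α) 1, h1]

theorem exists_isRoot_charpoly_map_of_isRoot_add_neg_smul_one_sub (hα : 0 < α) {μ : ℂ}
    (hμ : ((W + -α • (1 - W)).map (algebraMap ℝ ℂ)).charpoly.IsRoot μ) (hμ1 : μ ≠ 1) :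
    ∃ ν : ℂ, (W.map (algebraMap ℝ ℂ)).charpoly.IsRoot ν ∧ ν ≠ 1 ∧
      ‖μ‖ ≤ (1 + α) * ‖ν‖ + α := by
  set c : ℂ := ((1 + α : ℝ) : ℂ)
  have hc : c ≠ 0 := Complex.ofReal_ne_zero.mpr (by linarith)
  obtain ⟨ν, rfl⟩ : ∃ ν, μ = c * ν + -α := ⟨(μ + α) / c, by field_simp; ring⟩
  rw [map_add_neg_smul_one_sub, isRoot_charpoly_smul_add_scalar_iff _ hc] at hμ
  refine ⟨ν, hμ, by rintro rfl; simp [c] at hμ1, (norm_add_le _ _).trans_eq ?_⟩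
  rw [norm_mul, norm_neg, Complex.norm_real, Complex.norm_real,
    Real.norm_of_nonneg (by linarith), Real.norm_of_nonneg hα.le]

end Feedback

end Matrix

theorem stmt11_general {n : ℕ} (W : Matrix (Fin n) (Fin n) ℝ) (w : Fin n → ℝ)
    (hW : Assumption1 W w) (r_max : ℝ)
    (hrmax : ∀ μ : ℂ, (W.map (algebraMap ℝ ℂ)).charpoly.IsRoot μ → μ ≠ 1 →
      ‖μ‖ ≤ r_max)
    (α : ℝ) (hα0 : 0 < α) (hα : α < (1 - r_max) / (1 + r_max)) :
    ∀ K : Matrix (Fin n) (Fin n) ℝ, K = -α • ((1 : Matrix (Fin n) (Fin n) ℝ) - W) →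
      K *ᵥ (1 : Fin n → ℝ) = 0 ∧
      w ᵥ* K = 0 ∧
      (∀ i j, W i j = 0 → i ≠ j → K i j = 0) ∧
      (((W + K).map (algebraMap ℝ ℂ)).charpoly.rootMultiplicity 1 = 1) ∧
      (∀ μ : ℂ, ((W + K).map (algebraMap ℝ ℂ)).charpoly.IsRoot μ → μ ≠ 1 →
        ‖μ‖ < 1) ∧
      (∀ x₀ : Fin n → ℝ,
        Tendsto (fun t : ℕ => ((W + K) ^ t) *ᵥ x₀) atTop
          (nhds ((w ⬝ᵥ x₀) • (1 : Fin n → ℝ)))) := by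
  obtain ⟨-, hW1, hWmult, -, hwW, hw1⟩ := hW
  rintro K rfl
  have hK1 : (-α • (1 - W)) *ᵥ 1 = 0 := by
    rw [smul_mulVec, sub_mulVec, one_mulVec, hW1, sub_self, smul_zero]
  have hwK : w ᵥ* (-α • (1 - W)) = 0 := by
    rw [vecMul_smul, vecMul_sub, vecMul_one, hwW, sub_self, smul_zero]
  have hmult := (rootMultiplicity_one_charpoly_map_add_neg_smul_one_sub W α (by linarith)).trans
    hWmult
  have hlt (μ : ℂ) (hμ : ((W + -α • (1 - W)).map (algebraMap ℝ ℂ)).charpoly.IsRoot μ)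
      (hμ1 : μ ≠ 1) : ‖μ‖ < 1 := by
    obtain ⟨ν, hν, hν1, hμν⟩ :=
      exists_isRoot_charpoly_map_of_isRoot_add_neg_smul_one_sub W α hα0 hμ hμ1
    calc ‖μ‖ ≤ (1 + α) * ‖ν‖ + α := hμν
      _ ≤ (1 + α) * r_max + α := by gcongr; exact hrmax ν hν hν1
      _ < 1 := one_add_mul_add_lt_one_of_lt_div hα0 hα
  refine ⟨hK1, hwK, fun i j hWij hij => by simp [one_apply_ne hij, hWij], hmult, hlt,
    tendsto_pow_mulVec_nhds_dotProduct_smul_one ?_ ?_ hw1 hmult hlt⟩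
  · rw [add_mulVec, hW1, hK1, add_zero]
  · rw [vecMul_add, hwW, hwK, add_zero]

/-- The distributed Laplacian-type feedback `K = -α (I - W)` with
`0 < α < (1 - r_max)/(1 + r_max)` satisfies all design requirements:
eigenvector-preserving constraints, sparsity, spectral conditions, and consensus
preservation. Here `r_max < 1` bounds the moduli of the non-unit eigenvalues of `W`. -/
theorem stmt11 {n : ℕ} (W : Matrix (Fin n) (Fin n) ℝ) (w : Fin n → ℝ)
    (hW : Assumption1 W w) (r_max : ℝ) (hr0 : 0 ≤ r_max) (hr1 : r_max < 1)
    (hrmax : ∀ μ : ℂ, (W.map (algebraMap ℝ ℂ)).charpoly.IsRoot μ → μ ≠ 1 →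
      ‖μ‖ ≤ r_max)
    (hrmax_attained : (∃ μ : ℂ, (W.map (algebraMap ℝ ℂ)).charpoly.IsRoot μ ∧ μ ≠ 1) →
      ∃ μ : ℂ, (W.map (algebraMap ℝ ℂ)).charpoly.IsRoot μ ∧ μ ≠ 1 ∧
        ‖μ‖ = r_max)
    (α : ℝ) (hα0 : 0 < α) (hα : α < (1 - r_max) / (1 + r_max)) :
    ∀ K : Matrix (Fin n) (Fin n) ℝ, K = -α • ((1 : Matrix (Fin n) (Fin n) ℝ) - W) →
      K *ᵥ (1 : Fin n → ℝ) = 0 ∧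
      w ᵥ* K = 0 ∧
      (∀ i j, W i j = 0 → i ≠ j → K i j = 0) ∧
      (((W + K).map (algebraMap ℝ ℂ)).charpoly.rootMultiplicity 1 = 1) ∧
      (∀ μ : ℂ, ((W + K).map (algebraMap ℝ ℂ)).charpoly.IsRoot μ → μ ≠ 1 →
        ‖μ‖ < 1) ∧
      (∀ x₀ : Fin n → ℝ,
        Tendsto (fun t : ℕ => ((W + K) ^ t) *ᵥ x₀) atTop
          (nhds ((w ⬝ᵥ x₀) • (1 : Fin n → ℝ)))) :=
  stmt11_general W w hW r_max hrmax α hα0 hα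
end
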